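/- arXiv:1005.2560 — 4 statements merged into one kernel-verified Lean document; each statement's English description precedes it below -/
import Mathlib

section
/- Let Γ be a finite connected graph with vertex set V, with all vertex degrees at most k, let 1 ≤ p < ∞, and let F : V → ℓ_p(ℕ) be an injective 1-Lipschitz map (‖F(x) − F(y)‖_p ≤ d(x,y) for all x,y). Then there exists w ∈ ℓ_p(ℕ) such that λ₁^{(p)}(Γ) · Σ_{x∈V} ‖F(x) − w‖_p^p ≤ k·|V|. -/
noncomputable section
open scoped ENNReal

/-- The simple graph underlying a finite graph with symmetric edge multiplicities `ω`:
distinct vertices are adjacent iff they are joined by at least one edge. -/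
def multGraph {V : Type*} (ω : V → V → ℕ) : SimpleGraph V where
  Adj x y := x ≠ y ∧ 1 ≤ ω x y ∧ 1 ≤ ω y x
  symm := by
    constructor
    rintro x y ⟨h1, h2, h3⟩
    exact ⟨h1.symm, h3, h2⟩
  loopless := ⟨fun x h => h.1 rfl⟩

/-- The shortest-path metric of the graph with edge multiplicities `ω`, as a real number. -/
def multDist {V : Type*} (ω : V → V → ℕ) (x y : V) : ℝ :=
  ((multGraph ω).dist x y : ℝ)

/-- The first positive eigenvalue `λ₁^{(p)}` of the discrete `p`-Laplacian of the finite graph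
with edge multiplicities `ω`, defined via the variational characterization (3). -/
def lambdaOne {V : Type*} [Fintype V] (ω : V → V → ℕ) (p : ℝ) : ℝ :=
  sInf {r : ℝ | ∃ f : V → ℝ, (¬ ∀ x y : V, f x = f y) ∧
    r = (∑ x : V, ∑ y : V, |f x - f y| ^ p * (ω x y : ℝ)) /
        (⨅ α : ℝ, ∑ x : V, |f x - α| ^ p)}

/-!
Apply the variational bound defining `λ₁^{(p)}` to each coordinate `i ↦ F x i` separately,
centred at a minimizer `w i` of `β ↦ Σ_x |F x i - β|^p`; these minimizers form an element of
`ℓ_p` because `|F x₀ i - w i|^p` is dominated by `Σ_x |F x i - F x₀ i|^p`. Summing over the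
coordinates turns both sides into `ℓ_p` norms, and since neighbours are at distance one the
Lipschitz bound gives `Σ_{x,y} ‖F x - F y‖^p ω(x,y) ≤ Σ_{x,y} ω(x,y) ≤ k |V|`.
-/

open Finset

section Minimizer

variable {V : Type*} [Fintype V]

lemma exists_forall_sum_abs_sub_rpow_le (f : V → ℝ) {p : ℝ} (hp : 0 ≤ p) :
    ∃ α : ℝ, ∀ β : ℝ, ∑ x, |f x - α| ^ p ≤ ∑ x, |f x - β| ^ p := by
  rcases isEmpty_or_nonempty V with _ | _
  · exact ⟨0, fun β => by simp⟩
  set m := univ.inf' univ_nonempty f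
  set M := univ.sup' univ_nonempty f
  have hf : ∀ x, f x ∈ Set.Icc m M := fun x =>
    ⟨inf'_le _ (mem_univ x), le_sup' _ (mem_univ x)⟩
  have hmM : m ≤ M := (hf (Classical.arbitrary V)).1.trans (hf _).2
  have hcont : Continuous fun β : ℝ => ∑ x, |f x - β| ^ p :=
    continuous_finsetSum _ fun x _ =>
      (continuous_const.sub continuous_id).abs.rpow_const fun _ => Or.inr hp
  obtain ⟨α, -, hα⟩ :=
    isCompact_Icc.exists_isMinOn (Set.nonempty_Icc.mpr hmM) hcont.continuousOn
  refine ⟨α, fun β => (hα (Set.projIcc m M hmM β).2).trans (sum_le_sum fun x _ => ?_)⟩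
  -- projecting `β` onto `[m, M]`, which contains all values of `f`, brings it closer to each one
  have hproj := Set.abs_projIcc_sub_projIcc hmM (c := f x) (d := β)
  rw [Set.projIcc_of_mem hmM (hf x)] at hproj
  exact Real.rpow_le_rpow (abs_nonneg _) hproj hp

end Minimizer

section RayleighQuotient

variable {V : Type*} [Fintype V] (ω : V → V → ℕ) {p : ℝ}

lemma lambdaOne_le_of_not_const {f : V → ℝ} (hf : ¬ ∀ x y, f x = f y) :
    lambdaOne ω p ≤
      (∑ x, ∑ y, |f x - f y| ^ p * (ω x y : ℝ)) / ⨅ α : ℝ, ∑ x, |f x - α| ^ p := by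
  refine csInf_le ⟨0, ?_⟩ ⟨f, hf, rfl⟩
  rintro r ⟨g, -, rfl⟩
  exact div_nonneg (sum_nonneg fun x _ => sum_nonneg fun y _ => by positivity)
    (Real.iInf_nonneg fun β => sum_nonneg fun x _ => by positivity)

lemma lambdaOne_mul_sum_abs_sub_rpow_le (hp : 0 < p) (f : V → ℝ) {α : ℝ}
    (hα : ∀ β : ℝ, ∑ x, |f x - α| ^ p ≤ ∑ x, |f x - β| ^ p) :
    lambdaOne ω p * ∑ x, |f x - α| ^ p ≤ ∑ x, ∑ y, |f x - f y| ^ p * (ω x y : ℝ) := by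
  have hrpow : ∀ a : ℝ, 0 ≤ |a| ^ p := fun a => Real.rpow_nonneg (abs_nonneg a) p
  set S := ∑ x, |f x - α| ^ p
  obtain hS | hS := (show 0 ≤ S from sum_nonneg fun x _ => hrpow _).eq_or_lt
  · rw [← hS, mul_zero]
    exact sum_nonneg fun x _ => sum_nonneg fun y _ => by positivity
  have hf : ¬ ∀ x y, f x = f y := by
    rintro hconst
    obtain ⟨x₀, -, -⟩ := exists_ne_zero_of_sum_ne_zero hS.ne'
    refine hS.not_ge ((hα (f x₀)).trans_eq (sum_eq_zero fun x _ => ?_))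
    rw [hconst x x₀, sub_self, abs_zero, Real.zero_rpow hp.ne']
  have hinf : (⨅ β : ℝ, ∑ x, |f x - β| ^ p) = S :=
    le_antisymm
      (ciInf_le ⟨0, Set.forall_mem_range.mpr fun β => sum_nonneg fun x _ => hrpow _⟩ α)
      (le_ciInf hα)
  have hle := lambdaOne_le_of_not_const ω hf (p := p)
  rw [hinf] at hle
  exact (le_div_iff₀ hS).mp hle

end RayleighQuotient

section LpCoordinates

variable {ι : Type*} {p : ℝ}

lemma lp.summable_abs_rpow (hp : 0 < p) (u : lp (fun _ : ι => ℝ) (ENNReal.ofReal p)) :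
    Summable fun i => |u i| ^ p := by
  have hp' : (ENNReal.ofReal p).toReal = p := ENNReal.toReal_ofReal hp.le
  simpa [hp'] using (lp.memℓp u).summable (hp'.symm ▸ hp)

lemma lp.norm_rpow_eq_tsum_abs_rpow (hp : 0 < p) (u : lp (fun _ : ι => ℝ) (ENNReal.ofReal p)) :
    ‖u‖ ^ p = ∑' i, |u i| ^ p := by
  have hp' : (ENNReal.ofReal p).toReal = p := ENNReal.toReal_ofReal hp.le
  simpa [hp'] using lp.norm_rpow_eq_tsum (hp'.symm ▸ hp) u

lemma exists_lp_forall_sum_abs_sub_rpow_le {V : Type*} [Fintype V] (hp : 0 < p)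
    (F : V → lp (fun _ : ι => ℝ) (ENNReal.ofReal p)) :
    ∃ w : lp (fun _ : ι => ℝ) (ENNReal.ofReal p),
      ∀ i β, ∑ x, |F x i - w i| ^ p ≤ ∑ x, |F x i - β| ^ p := by
  rcases isEmpty_or_nonempty V with _ | ⟨⟨x₀⟩⟩
  · exact ⟨0, fun i β => by simp⟩
  choose α hα using fun i => exists_forall_sum_abs_sub_rpow_le (fun x => F x i) hp.le
  have hmem : Memℓp (fun i => α i - F x₀ i) (ENNReal.ofReal p) := by
    refine memℓp_gen ?_
    rw [ENNReal.toReal_ofReal hp.le]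
    refine .of_nonneg_of_le (fun i => by positivity) (fun i => ?_)
      (summable_sum (s := univ) fun x _ => lp.summable_abs_rpow hp (F x - F x₀))
    calc ‖α i - F x₀ i‖ ^ p = |F x₀ i - α i| ^ p := by rw [Real.norm_eq_abs, abs_sub_comm]
      _ ≤ ∑ x, |F x i - α i| ^ p :=
        single_le_sum (f := fun x => |F x i - α i| ^ p) (fun x _ => by positivity) (mem_univ x₀)
      _ ≤ ∑ x, |(F x - F x₀) i| ^ p := hα i _
  refine ⟨⟨α, show Memℓp α _ from ?_⟩, hα⟩
  convert (lp.memℓp (F x₀)).add hmem using 1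
  ext i
  simp

end LpCoordinates

section Energy

variable {V : Type*} {ω : V → V → ℕ}

lemma multDist_eq_one (hsymm : ∀ x y, ω x y = ω y x) {x y : V} (hxy : x ≠ y)
    (h : 1 ≤ ω x y) : multDist ω x y = 1 := by
  have hadj : (multGraph ω).Adj x y := ⟨hxy, h, hsymm x y ▸ h⟩
  simp [multDist, SimpleGraph.dist_eq_one_iff_adj.mpr hadj]

lemma sum_sum_norm_sub_rpow_mul_le [Fintype V] {E : Type*} [SeminormedAddCommGroup E]
    (hsymm : ∀ x y, ω x y = ω y x) {k : ℕ} (hdeg : ∀ x, ∑ y, ω x y ≤ k)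
    {p : ℝ} (hp : 0 < p)
    {F : V → E} (hlip : ∀ x y, ‖F x - F y‖ ≤ multDist ω x y) :
    ∑ x, ∑ y, ‖F x - F y‖ ^ p * (ω x y : ℝ) ≤ k * Fintype.card V := by
  have hterm : ∀ x y, ‖F x - F y‖ ^ p * (ω x y : ℝ) ≤ ω x y := by
    intro x y
    rcases Nat.eq_zero_or_pos (ω x y) with h0 | hpos
    · simp [h0]
    rcases eq_or_ne x y with rfl | hxy
    · simp [Real.zero_rpow hp.ne']
    have h1 : ‖F x - F y‖ ≤ 1 := (hlip x y).trans_eq (multDist_eq_one hsymm hxy hpos)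
    exact mul_le_of_le_one_left (Nat.cast_nonneg _) (Real.rpow_le_one (norm_nonneg _) h1 hp.le)
  calc ∑ x, ∑ y, ‖F x - F y‖ ^ p * (ω x y : ℝ)
        ≤ ∑ x, ((∑ y, ω x y : ℕ) : ℝ) := by
        push_cast
        exact sum_le_sum fun x _ => sum_le_sum fun y _ => hterm x y
    _ ≤ ∑ _x : V, (k : ℝ) := sum_le_sum fun x _ => by exact_mod_cast hdeg x
    _ = k * Fintype.card V := by simp [mul_comm]

end Energy

theorem statement_2_general {V : Type*} [Fintype V] (ω : V → V → ℕ)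
    (hsymm : ∀ x y : V, ω x y = ω y x)
    (k : ℕ) (hdeg : ∀ x : V, (∑ y : V, ω x y) ≤ k)
    (p : ℝ) (hp : 1 ≤ p)
    (F : V → lp (fun _ : ℕ => ℝ) (ENNReal.ofReal p))
    (hlip : ∀ x y : V, ‖F x - F y‖ ≤ multDist ω x y) :
    ∃ w : lp (fun _ : ℕ => ℝ) (ENNReal.ofReal p),
      lambdaOne ω p * ∑ x : V, ‖F x - w‖ ^ p ≤ (k : ℝ) * (Fintype.card V : ℝ) := by
  have hp₀ : 0 < p := by linarith
  have : Fact (1 ≤ ENNReal.ofReal p) := ⟨ENNReal.one_le_ofReal.mpr hp⟩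
  obtain ⟨w, hw⟩ := exists_lp_forall_sum_abs_sub_rpow_le hp₀ F
  have hsummable : ∀ x (v : lp (fun _ : ℕ => ℝ) (ENNReal.ofReal p)),
      Summable fun i => |F x i - v i| ^ p := fun x v => lp.summable_abs_rpow hp₀ (F x - v)
  have hvariance : ∑ x, ‖F x - w‖ ^ p = ∑' i, ∑ x, |F x i - w i| ^ p := by
    simp_rw [lp.norm_rpow_eq_tsum_abs_rpow hp₀]
    exact (Summable.tsum_finsetSum fun x _ => hsummable x w).symm
  have henergy : ∑ x, ∑ y, ‖F x - F y‖ ^ p * (ω x y : ℝ) =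
      ∑' i, ∑ x, ∑ y, |F x i - F y i| ^ p * (ω x y : ℝ) := by
    simp_rw [lp.norm_rpow_eq_tsum_abs_rpow hp₀, lp.coeFn_sub, Pi.sub_apply, ← tsum_mul_right]
    rw [Summable.tsum_finsetSum fun x _ =>
      summable_sum fun y _ => (hsummable x (F y)).mul_right _]
    exact sum_congr rfl fun x _ =>
      (Summable.tsum_finsetSum fun y _ => (hsummable x (F y)).mul_right _).symm
  refine ⟨w, ?_⟩
  calc lambdaOne ω p * ∑ x, ‖F x - w‖ ^ p
        = ∑' i, lambdaOne ω p * ∑ x, |F x i - w i| ^ p := by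
        rw [hvariance, tsum_mul_left]
    _ ≤ ∑' i, ∑ x, ∑ y, |F x i - F y i| ^ p * (ω x y : ℝ) :=
        Summable.tsum_le_tsum (fun i => lambdaOne_mul_sum_abs_sub_rpow_le ω hp₀ _ (hw i))
          ((summable_sum fun x _ => hsummable x w).mul_left _)
          (summable_sum fun x _ => summable_sum fun y _ => (hsummable x (F y)).mul_right _)
    _ = ∑ x, ∑ y, ‖F x - F y‖ ^ p * (ω x y : ℝ) := henergy.symm
    _ ≤ k * Fintype.card V := sum_sum_norm_sub_rpow_mul_le hsymm hdeg hp₀ hlip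

/-- if `F : V → ℓ_p(ℕ)` is injective and `1`-Lipschitz on a finite connected graph
with degrees at most `k`, then there is `w ∈ ℓ_p(ℕ)` with
`λ₁^{(p)}(Γ) · Σ_x ‖F x − w‖^p ≤ k·|V|`. -/
theorem statement_2 {V : Type*} [Fintype V] (ω : V → V → ℕ)
    (hsymm : ∀ x y : V, ω x y = ω y x)
    (hconn : (multGraph ω).Connected)
    (k : ℕ) (hdeg : ∀ x : V, (∑ y : V, ω x y) ≤ k)
    (p : ℝ) (hp : 1 ≤ p)
    (F : V → lp (fun _ : ℕ => ℝ) (ENNReal.ofReal p))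
    (hinj : Function.Injective F)
    (hlip : ∀ x y : V, ‖F x - F y‖ ≤ multDist ω x y) :
    ∃ w : lp (fun _ : ℕ => ℝ) (ENNReal.ofReal p),
      lambdaOne ω p * ∑ x : V, ‖F x - w‖ ^ p ≤ (k : ℝ) * (Fintype.card V : ℝ) :=
  statement_2_general ω hsymm k hdeg p hp F hlip
end
end

section
/- Let Γ be a finite connected vertex-transitive simple graph on vertex set V with shortest-path metric d and diameter δ(Γ) ≥ 3. Then for every vertex x ∈ V, the ball B_x(δ(Γ)/4) = { y ∈ V : 4·d(x,y) ≤ δ(Γ) } satisfies 2·|B_x(δ(Γ)/4)| < |V|. -/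
private lemma iso_dist {V : Type*} {G : SimpleGraph V} (hconn : G.Connected) (φ : G ≃g G)
    (a b : V) : G.dist (φ a) (φ b) = G.dist a b := by
  have key : ∀ (ψ : G ≃g G) (a b : V), G.dist (ψ a) (ψ b) ≤ G.dist a b := by
    intro ψ a b
    obtain ⟨p, hp⟩ := hconn.exists_walk_length_eq_dist a b
    calc G.dist (ψ a) (ψ b) ≤ (p.map ψ.toHom).length := SimpleGraph.dist_le _
      _ = p.length := p.length_map _
      _ = G.dist a b := hp
  have h2 := key φ.symm (φ a) (φ b)
  simp only [RelIso.symm_apply_apply] at h2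
  exact le_antisymm (key φ a b) h2

private lemma dist_getVert_le {V : Type*} {G : SimpleGraph V} (hconn : G.Connected) :
    ∀ {u v : V} (p : G.Walk u v) (k : ℕ), G.dist u (p.getVert k) ≤ k := by
  intro u v p
  induction p with
  | nil => intro k; simp [SimpleGraph.Walk.getVert, SimpleGraph.dist_self]
  | @cons a b c h q ih =>
    intro k
    cases k with
    | zero => simp
    | succ k =>
      rw [SimpleGraph.Walk.getVert_cons_succ]
      calc G.dist a (q.getVert k) ≤ G.dist a b + G.dist b (q.getVert k) :=
            hconn.dist_triangle
        _ ≤ 1 + k := by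
            have h1 : G.dist a b ≤ 1 := by
              simpa using SimpleGraph.dist_le (SimpleGraph.Walk.cons h SimpleGraph.Walk.nil)
            exact Nat.add_le_add h1 (ih k)
        _ = k + 1 := by omega

/-- in a finite connected vertex-transitive simple graph of diameter `δ(Γ) ≥ 3`,
every ball `B_x(δ(Γ)/4) = {y : 4·d(x,y) ≤ δ(Γ)}` contains strictly fewer than half of the
vertices: `2·|B_x(δ(Γ)/4)| < |V|`. -/
theorem statement_4 {V : Type*} [Fintype V] [DecidableEq V] (G : SimpleGraph V)
    (hconn : G.Connected)
    (htrans : ∀ x y : V, ∃ φ : G ≃g G, φ x = y)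
    (hdiam : 3 ≤ Finset.univ.sup (fun pq : V × V => G.dist pq.1 pq.2))
    (x : V) :
    2 * (Finset.univ.filter
        (fun y : V => 4 * G.dist x y ≤
          Finset.univ.sup (fun pq : V × V => G.dist pq.1 pq.2))).card <
      Fintype.card V := by
  set δ := Finset.univ.sup (fun pq : V × V => G.dist pq.1 pq.2) with hδ
  have hne : (Finset.univ : Finset (V × V)).Nonempty := by
    have : Nonempty V := hconn.nonempty
    exact Finset.univ_nonempty
  obtain ⟨⟨u, v⟩, -, huv⟩ := Finset.exists_mem_eq_sup _ hne
    (fun pq : V × V => G.dist pq.1 pq.2)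
  rw [← hδ] at huv
  -- huv : δ = G.dist u v
  -- midpoint
  obtain ⟨p, hp⟩ := hconn.exists_walk_length_eq_dist u v
  set m := p.getVert (δ / 2) with hm
  have hum : G.dist u m ≤ δ / 2 := dist_getVert_le hconn p (δ / 2)
  have hmv : G.dist m v ≤ δ - δ / 2 := by
    have := dist_getVert_le hconn p.reverse (p.length - δ / 2)
    rw [SimpleGraph.Walk.getVert_reverse] at this
    have hlen : p.length = δ := by rw [hp, huv]
    have hhalf : δ / 2 ≤ p.length := by omega
    have : G.dist v (p.getVert (δ / 2)) ≤ δ - δ / 2 := by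
      rw [show p.length - (p.length - δ / 2) = δ / 2 by omega] at this
      omega
    rw [SimpleGraph.dist_comm]
    exact this
  have htri : δ ≤ G.dist u m + G.dist m v := by
    rw [huv]; exact hconn.dist_triangle
  have humgt : δ < 4 * G.dist u m := by omega
  have hmvgt : δ < 4 * G.dist m v := by omega
  -- all balls have the same cardinality
  have hcard : ∀ z : V,
      (Finset.univ.filter (fun y : V => 4 * G.dist x y ≤ δ)).card =
      (Finset.univ.filter (fun y : V => 4 * G.dist z y ≤ δ)).card := by
    intro z
    obtain ⟨φ, hφ⟩ := htrans x z
    apply Finset.card_bij (fun y _ => φ y)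
    · intro y hy
      simp only [Finset.mem_filter, Finset.mem_univ, true_and] at hy ⊢
      rw [← hφ, iso_dist hconn φ]
      exact hy
    · intro y1 _ y2 _ h
      exact φ.injective h
    · intro y hy
      refine ⟨φ.symm y, ?_, by simp⟩
      simp only [Finset.mem_filter, Finset.mem_univ, true_and] at hy ⊢
      rw [← iso_dist hconn φ, hφ, RelIso.apply_symm_apply]
      exact hy
  -- balls around u and v are disjoint and miss m
  set Bu := Finset.univ.filter (fun y : V => 4 * G.dist u y ≤ δ) with hBu
  set Bv := Finset.univ.filter (fun y : V => 4 * G.dist v y ≤ δ) with hBv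
  have hdisj : Disjoint Bu Bv := by
    rw [Finset.disjoint_left]
    intro y hyu hyv
    simp only [hBu, hBv, Finset.mem_filter, Finset.mem_univ, true_and] at hyu hyv
    have h3 : δ ≤ G.dist u y + G.dist y v := by rw [huv]; exact hconn.dist_triangle
    have h4 : G.dist y v = G.dist v y := SimpleGraph.dist_comm
    omega
  have hmBu : m ∉ Bu := by
    simp only [hBu, Finset.mem_filter, Finset.mem_univ, true_and]
    omega
  have hmBv : m ∉ Bv := by
    simp only [hBv, Finset.mem_filter, Finset.mem_univ, true_and]
    rw [SimpleGraph.dist_comm]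
    omega
  have hsub : Bu ∪ Bv ⊆ Finset.univ.erase m := by
    intro y hy
    rw [Finset.mem_union] at hy
    refine Finset.mem_erase.mpr ⟨?_, Finset.mem_univ y⟩
    rintro rfl
    rcases hy with h | h
    · exact hmBu h
    · exact hmBv h
  have hle : Bu.card + Bv.card ≤ Fintype.card V - 1 := by
    calc Bu.card + Bv.card = (Bu ∪ Bv).card := (Finset.card_union_of_disjoint hdisj).symm
      _ ≤ (Finset.univ.erase m).card := Finset.card_le_card hsub
      _ = Fintype.card V - 1 := by rw [Finset.card_erase_of_mem (Finset.mem_univ m),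
            Finset.card_univ]
  have hpos : 0 < Fintype.card V := Fintype.card_pos_iff.mpr hconn.nonempty
  calc 2 * (Finset.univ.filter (fun y : V => 4 * G.dist x y ≤ δ)).card
      = Bu.card + Bv.card := by rw [hBu, hBv, ← hcard u, ← hcard v]; ring
    _ ≤ Fintype.card V - 1 := hle
    _ < Fintype.card V := by omega
end

section
/- For every 1 ≤ p < ∞ there exists a constant C > 0 such that for all n ≥ 1 the ℓ_p-distortion of the level-n Hanoi Schreier graph Γ_n satisfies c_{(p)}(Γ_n) ≤ C. -/
noncomputable section
open scoped ENNReal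

/-- The generator `a_{(ij)}` of the Hanoi Towers group acting on finite ternary words:
`a_{(ij)}(iw) = jw`, `a_{(ij)}(jw) = iw`, and `a_{(ij)}(kw) = k·a_{(ij)}(w)` for
`k ∉ {i,j}`. -/
def hanoiMove (i j : Fin 3) : List (Fin 3) → List (Fin 3)
  | [] => []
  | x :: w => if x = i then j :: w else if x = j then i :: w else x :: hanoiMove i j w

/-- The level-`n` Hanoi Schreier graph `Γ_n`: vertices are ternary words of length `n`, and
distinct `x, y` are adjacent iff `y ∈ {a(x), b(x), c(x)}` with `a = a_{(01)}`, `b = a_{(02)}`,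
`c = a_{(12)}` (the relation is symmetrized; since the generators are involutions this is the
same relation). -/
def hanoiGraph (n : ℕ) : SimpleGraph (List.Vector (Fin 3) n) where
  Adj x y := x ≠ y ∧ ∃ s ∈ [hanoiMove 0 1, hanoiMove 0 2, hanoiMove 1 2],
    s x.toList = y.toList ∨ s y.toList = x.toList
  symm := ⟨by
    rintro x y ⟨h1, s, hs, h2⟩
    exact ⟨h1.symm, s, hs, h2.symm⟩⟩
  loopless := ⟨fun x h => h.1 rfl⟩

/-- The `ℓ_p`-distortion `c_{(p)}(X)` of a finite metric space `(X, d)`: the infimum over all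
injective `1`-Lipschitz maps `F : X → ℓ_p(ℕ)` of `L_F = max_{x ≠ y} d(x,y)/‖F x − F y‖`. -/
def lpDistortion (X : Type*) [Fintype X] (d : X → X → ℝ) (p : ℝ≥0∞) : ℝ :=
  sInf {L : ℝ | ∃ F : X → lp (fun _ : ℕ => ℝ) p, Function.Injective F ∧
    (∀ x y : X, ‖F x - F y‖ ≤ d x y) ∧
    L = sSup {r : ℝ | ∃ x y : X, x ≠ y ∧ r = d x y / ‖F x - F y‖}}

/-!
A configuration `x` of `Γ_n` is sent to the lattice point `point x` of the triangle
`{v ∈ ℕ³ | v₀ + v₁ + v₂ = 2ⁿ - 1}`: the largest disk, on peg `s`, contributes `2ⁿ⁻¹ eₛ`, and the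
smaller disks are placed recursively in the sub-triangle at corner `s`, reflected so that its
corners line up with those of the big triangle. A move changes the point by `e_p - e_q`, so the map
is `2`-Lipschitz for the `ℓ¹` norm. Conversely, by induction on `n`, two configurations are joined
by a walk whose length is at most the `ℓ¹` distance of their points: if their largest disks lie on
different pegs `s ≠ t`, route through the perfect states on the third peg; the `s`- and
`t`-coordinates alone already pay for that route. So `Γ_n` embeds into `ℓ¹(Fin 3)` with distortion
`2`, and since the `ℓᵖ`, `ℓ¹` and `ℓ^∞` norms on `ℝ³` agree up to a factor `3`, into `ℓᵖ` with
distortion at most `6`.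
-/

theorem SimpleGraph.Walk.norm_sub_le_mul_length {V E : Type*} [SeminormedAddCommGroup E]
    {G : SimpleGraph V} {f : V → E} {K : ℝ} (hf : ∀ x y, G.Adj x y → ‖f x - f y‖ ≤ K)
    {x y : V} (w : G.Walk x y) : ‖f x - f y‖ ≤ K * w.length := by
  induction w with
  | nil => simp
  | @cons x z y h w ih =>
    rw [SimpleGraph.Walk.length_cons, Nat.cast_succ, mul_add_one, add_comm]
    exact (norm_sub_le_norm_sub_add_norm_sub _ _ _).trans (add_le_add (hf x z h) ih)

theorem SimpleGraph.Reachable.norm_sub_le_mul_dist {V E : Type*} [SeminormedAddCommGroup E]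
    {G : SimpleGraph V} {f : V → E} {K : ℝ} (hf : ∀ x y, G.Adj x y → ‖f x - f y‖ ≤ K)
    {x y : V} (h : G.Reachable x y) : ‖f x - f y‖ ≤ K * G.dist x y := by
  obtain ⟨w, hw⟩ := h.exists_walk_length_eq_dist
  exact hw ▸ w.norm_sub_le_mul_length hf

def finToLp (p : ℝ≥0∞) {k : ℕ} (v : Fin k → ℝ) : lp (fun _ : ℕ => ℝ) p :=
  ∑ i : Fin k, lp.single p (i : ℕ) (v i)

theorem finToLp_apply (p : ℝ≥0∞) {k : ℕ} (v : Fin k → ℝ) (i : Fin k) :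
    finToLp p v i = v i := by
  rw [finToLp, lp.coeFn_sum, Finset.sum_apply, Finset.sum_eq_single i]
  · exact lp.single_apply_self _ _ _
  · exact fun j _ hji => lp.single_apply_ne _ _ _ (Fin.val_injective.ne hji.symm)
  · simp

theorem finToLp_sub (p : ℝ≥0∞) {k : ℕ} (v w : Fin k → ℝ) :
    finToLp p v - finToLp p w = finToLp p (v - w) := by
  simp [finToLp, lp.single_sub, Finset.sum_sub_distrib]

theorem norm_finToLp_le (p : ℝ≥0∞) [Fact (1 ≤ p)] {k : ℕ} (v : Fin k → ℝ) :
    ‖finToLp p v‖ ≤ ∑ i, |v i| :=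
  (norm_sum_le _ _).trans_eq <| Finset.sum_congr rfl fun i _ => by
    rw [lp.norm_single (zero_lt_one.trans_le Fact.out), Real.norm_eq_abs]

theorem sum_abs_le_mul_norm_finToLp (p : ℝ≥0∞) [Fact (1 ≤ p)] {k : ℕ} (v : Fin k → ℝ) :
    ∑ i, |v i| ≤ k * ‖finToLp p v‖ := by
  have hp : p ≠ 0 := (zero_lt_one.trans_le Fact.out).ne'
  calc ∑ i, |v i| ≤ ∑ _i : Fin k, ‖finToLp p v‖ := Finset.sum_le_sum fun i _ => by
        simpa [finToLp_apply] using lp.norm_apply_le_norm hp (finToLp p v) i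
    _ = k * ‖finToLp p v‖ := by simp

theorem lpDistortion_le {X : Type*} [Fintype X] {d : X → X → ℝ} {p : ℝ≥0∞}
    (F : X → lp (fun _ : ℕ => ℝ) p) {C : ℝ} (hC : 0 ≤ C) (hd : ∀ x y, x ≠ y → 0 < d x y)
    (hF : ∀ x y, ‖F x - F y‖ ≤ d x y) (hF' : ∀ x y, x ≠ y → d x y ≤ C * ‖F x - F y‖) :
    lpDistortion X d p ≤ C := by
  have hpos : ∀ x y, x ≠ y → 0 < ‖F x - F y‖ := fun x y hxy =>
    pos_of_mul_pos_right ((hd x y hxy).trans_le (hF' x y hxy)) hC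
  have hinj : Function.Injective F := fun x y h => by
    by_contra hxy
    simpa [h] using hpos x y hxy
  refine csInf_le_of_le ⟨0, ?_⟩ ⟨F, hinj, hF, rfl⟩ (Real.sSup_le ?_ hC)
  · rintro L ⟨F', -, -, rfl⟩
    refine Real.sSup_nonneg fun r ⟨x, y, hxy, hr⟩ => hr ▸ ?_
    exact div_nonneg (hd x y hxy).le (lp.norm_nonneg' _)
  · rintro r ⟨x, y, hxy, rfl⟩
    exact (div_le_iff₀ (hpos x y hxy)).mpr (hF' x y hxy)

theorem Fin.sum_univ_three_of_ne {a b c : Fin 3} (hab : a ≠ b) (hac : a ≠ c) (hbc : b ≠ c)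
    {M : Type*} [AddCommMonoid M] (g : Fin 3 → M) : ∑ i, g i = g a + g b + g c := by
  have huniv : (Finset.univ : Finset (Fin 3)) = {a, b, c} := by
    revert a b c; decide
  rw [huniv, Finset.sum_insert (by simp [hab, hac]), Finset.sum_pair hbc, add_assoc]

theorem List.Vector.toList_snoc {α : Type*} {n : ℕ} (u : List.Vector α n) (s : α) :
    (u.snoc s).toList = u.toList ++ [s] := by
  simp [List.Vector.snoc, List.Vector.toList_append]

theorem List.Vector.exists_eq_snoc {α : Type*} {n : ℕ} (x : List.Vector α (n + 1)) :
    ∃ (u : List.Vector α n) (s : α), x = u.snoc s := by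
  obtain ⟨L, s, h⟩ :=
    (List.eq_nil_or_concat x.toList).resolve_left (by simp [← List.length_eq_zero_iff])
  rw [List.concat_eq_append] at h
  have hL : L.length = n := by simpa [h] using x.toList_length
  let u : List.Vector α n := ⟨L, hL⟩
  exact ⟨u, s, List.Vector.toList_injective (h.trans (List.Vector.toList_snoc u s).symm)⟩

namespace Hanoi

open SimpleGraph

/-- The symmetry of the triangle fixing the corner `t`: it fixes `t` and swaps the other two
pegs. -/
def reflect (t a : Fin 3) : Fin 3 := -t - a

theorem reflect_self : ∀ t : Fin 3, reflect t t = t := by decide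

theorem reflect_reflect : ∀ t a : Fin 3, reflect t (reflect t a) = a := by decide

theorem reflect_involutive (t : Fin 3) : Function.Involutive (reflect t) := reflect_reflect t

theorem reflect_comm : ∀ a b : Fin 3, reflect a b = reflect b a := by decide

theorem reflect_ne_left : ∀ {a b : Fin 3}, a ≠ b → reflect a b ≠ a := by decide

theorem reflect_ne_right : ∀ {a b : Fin 3}, a ≠ b → reflect a b ≠ b := by decide

theorem eq_reflect_of_ne : ∀ {a b c : Fin 3}, a ≠ b → c ≠ a → c ≠ b → c = reflect a b := by
  decide

theorem reflect_eq_self_iff : ∀ t a : Fin 3, reflect t a = t ↔ a = t := by decide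

theorem hanoiMove_comm (i j : Fin 3) : hanoiMove i j = hanoiMove j i := by
  funext l
  induction l with
  | nil => rfl
  | cons x w ih =>
    simp only [hanoiMove]
    split_ifs <;> simp_all

theorem hanoiMove_involutive (i j : Fin 3) : Function.Involutive (hanoiMove i j) := by
  intro l
  induction l with
  | nil => rfl
  | cons x w ih =>
    simp only [hanoiMove]
    split_ifs <;> simp_all [hanoiMove]

theorem hanoiMove_append {i j : Fin 3} {l : List (Fin 3)} (h : hanoiMove i j l ≠ l)
    (r : List (Fin 3)) : hanoiMove i j (l ++ r) = hanoiMove i j l ++ r := by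
  induction l with
  | nil => exact absurd rfl h
  | cons x w ih =>
    simp only [hanoiMove] at h ⊢
    split_ifs at h ⊢ <;> simp_all [hanoiMove]

theorem hanoiMove_replicate_append {i j k : Fin 3} (hki : k ≠ i) (hkj : k ≠ j) (m : ℕ)
    (l : List (Fin 3)) :
    hanoiMove i j (List.replicate m k ++ l) = List.replicate m k ++ hanoiMove i j l := by
  induction m with
  | zero => rfl
  | succ m ih => simp [List.replicate_succ, hanoiMove, hki, hkj, ih]

theorem exists_replicate_append_of_hanoiMove_ne {i j : Fin 3} (hij : i ≠ j) {l : List (Fin 3)}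
    (h : hanoiMove i j l ≠ l) :
    ∃ (m : ℕ) (u : List (Fin 3)) (a b : Fin 3), a ≠ b ∧ a ≠ reflect i j ∧ b ≠ reflect i j ∧
      l = List.replicate m (reflect i j) ++ a :: u ∧
      hanoiMove i j l = List.replicate m (reflect i j) ++ b :: u := by
  induction l with
  | nil => exact absurd rfl h
  | cons x w ih =>
    by_cases hxi : x = i
    · subst hxi
      exact ⟨0, w, x, j, hij, (reflect_ne_left hij).symm, (reflect_ne_right hij).symm, rfl,
        by simp [hanoiMove]⟩
    by_cases hxj : x = j
    · subst hxj
      exact ⟨0, w, x, i, hij.symm, (reflect_ne_right hij).symm, (reflect_ne_left hij).symm, rfl,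
        by simp [hanoiMove, hxi]⟩
    have hw : hanoiMove i j w ≠ w := by simpa [hanoiMove, hxi, hxj] using h
    obtain ⟨m, u, a, b, hab, ha, hb, hl, hm⟩ := ih hw
    obtain rfl := eq_reflect_of_ne hij hxi hxj
    exact ⟨m + 1, u, a, b, hab, ha, hb, by simp [hl, List.replicate_succ],
      by simp [hanoiMove, hxi, hxj, hm, List.replicate_succ]⟩

/-- The point of a word listing the disks from the largest one; `2 ^ w.length - 1 - pos w t` is
the distance to the perfect state on peg `t` (compare `exists_walk_to_corner`). -/
def pos : List (Fin 3) → Fin 3 → ℝ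
  | [], _ => 0
  | t :: w, i => (if i = t then 2 ^ w.length else 0) + pos w (reflect t i)

theorem pos_nonneg : ∀ (w : List (Fin 3)) (i : Fin 3), 0 ≤ pos w i
  | [], _ => le_rfl
  | t :: w, i => add_nonneg (by positivity) (pos_nonneg w _)

theorem pos_replicate (m : ℕ) (k i : Fin 3) :
    pos (List.replicate m k) i = if i = k then 2 ^ m - 1 else 0 := by
  induction m generalizing i with
  | zero => simp [pos]
  | succ m ih =>
    simp only [List.replicate_succ, pos, ih, List.length_replicate, reflect_eq_self_iff]
    split_ifs <;> ring

theorem sum_abs_pos_sub_eq_two {a b k : Fin 3} (hab : a ≠ b) (hak : a ≠ k) (hbk : b ≠ k)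
    (m : ℕ) (v : List (Fin 3)) :
    ∑ i, |pos (v ++ a :: List.replicate m k) i - pos (v ++ b :: List.replicate m k) i| = 2 := by
  induction v with
  | nil =>
    obtain rfl := eq_reflect_of_ne hab hak.symm hbk.symm
    rw [Fin.sum_univ_three_of_ne hab hak hbk]
    have hba : reflect b (reflect a b) = a := by rw [reflect_comm a b, reflect_reflect]
    norm_num [pos, pos_replicate, reflect_self, reflect_reflect, reflect_comm b a, hba, hab,
      hab.symm, hak, hak.symm, hbk, hbk.symm]
  | cons t v ih =>
    simp only [List.cons_append, pos, List.length_append, List.length_cons,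
      add_sub_add_left_eq_sub]
    exact (Equiv.sum_comp (reflect_involutive t).toPerm _).trans ih

/-- Vertices list the disks from the smallest one, hence the reversal. -/
def point {n : ℕ} (x : List.Vector (Fin 3) n) : Fin 3 → ℝ := pos x.toList.reverse

def corner (n : ℕ) (t : Fin 3) : List.Vector (Fin 3) n := List.Vector.replicate n t

theorem toList_corner (n : ℕ) (t : Fin 3) : (corner n t).toList = List.replicate n t := rfl

theorem point_nonneg {n : ℕ} (x : List.Vector (Fin 3) n) (i : Fin 3) : 0 ≤ point x i :=
  pos_nonneg _ _

theorem point_snoc {n : ℕ} (u : List.Vector (Fin 3) n) (s i : Fin 3) :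
    point (u.snoc s) i = (if i = s then 2 ^ n else 0) + point u (reflect s i) := by
  simp [point, List.Vector.toList_snoc, pos]

theorem point_corner (n : ℕ) (t i : Fin 3) :
    point (corner n t) i = if i = t then 2 ^ n - 1 else 0 := by
  simp [point, toList_corner, pos_replicate]

theorem corner_succ (n : ℕ) (t : Fin 3) : corner (n + 1) t = (corner n t).snoc t :=
  List.Vector.replicate_succ_to_snoc t

theorem hanoiMove_mem_generators {i j : Fin 3} (hij : i ≠ j) :
    hanoiMove i j ∈ [hanoiMove 0 1, hanoiMove 0 2, hanoiMove 1 2] := by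
  fin_cases i <;> fin_cases j <;>
    simp_all [hanoiMove_comm 1 0, hanoiMove_comm 2 0, hanoiMove_comm 2 1]

theorem hanoiGraph_adj_iff {n : ℕ} {x y : List.Vector (Fin 3) n} :
    (hanoiGraph n).Adj x y ↔ x ≠ y ∧ ∃ i j, i ≠ j ∧ hanoiMove i j x.toList = y.toList := by
  constructor
  · rintro ⟨hne, g, hg, h⟩
    obtain ⟨i, j, hij, rfl⟩ : ∃ i j : Fin 3, i ≠ j ∧ g = hanoiMove i j := by
      simp only [List.mem_cons, List.not_mem_nil, or_false] at hg
      rcases hg with rfl | rfl | rfl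
      exacts [⟨0, 1, by decide, rfl⟩, ⟨0, 2, by decide, rfl⟩, ⟨1, 2, by decide, rfl⟩]
    refine ⟨hne, i, j, hij, h.elim id fun h => ?_⟩
    rw [← h, hanoiMove_involutive]
  · rintro ⟨hne, i, j, hij, h⟩
    exact ⟨hne, hanoiMove i j, hanoiMove_mem_generators hij, Or.inl h⟩

def snocHom (n : ℕ) (s : Fin 3) : hanoiGraph n →g hanoiGraph (n + 1) where
  toFun u := u.snoc s
  map_rel' {x y} h := by
    obtain ⟨hne, i, j, hij, h⟩ := hanoiGraph_adj_iff.mp h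
    have hmove : hanoiMove i j x.toList ≠ x.toList :=
      h ▸ fun e => hne (List.Vector.toList_injective e.symm)
    refine hanoiGraph_adj_iff.mpr ⟨fun e => hne ?_, i, j, hij, ?_⟩
    · apply List.Vector.toList_injective
      simpa [List.Vector.toList_snoc] using congrArg List.Vector.toList e
    · simp [List.Vector.toList_snoc, hanoiMove_append hmove, h]

theorem adj_snoc_corner {n : ℕ} {s t : Fin 3} (hst : s ≠ t) :
    (hanoiGraph (n + 1)).Adj ((corner n (reflect s t)).snoc s)
      ((corner n (reflect s t)).snoc t) := by
  refine hanoiGraph_adj_iff.mpr ⟨fun e => hst ?_, s, t, hst, ?_⟩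
  · simpa [List.Vector.toList_snoc] using congrArg List.Vector.toList e
  · simp [List.Vector.toList_snoc, toList_corner, hanoiMove_replicate_append (reflect_ne_left hst)
      (reflect_ne_right hst), hanoiMove]

theorem sum_abs_point_sub_of_adj {n : ℕ} {x y : List.Vector (Fin 3) n}
    (h : (hanoiGraph n).Adj x y) : ∑ i, |point x i - point y i| = 2 := by
  obtain ⟨hne, i, j, hij, h⟩ := hanoiGraph_adj_iff.mp h
  have hmove : hanoiMove i j x.toList ≠ x.toList :=
    h ▸ fun e => hne (List.Vector.toList_injective e.symm)
  obtain ⟨m, u, a, b, hab, ha, hb, hx, hy⟩ := exists_replicate_append_of_hanoiMove_ne hij hmove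
  rw [h] at hy
  simp only [point, hx, hy, List.reverse_append, List.reverse_cons, List.reverse_replicate,
    List.append_assoc, List.singleton_append]
  exact sum_abs_pos_sub_eq_two hab ha hb m u.reverse

def snocWalk {n : ℕ} (s : Fin 3) {u v : List.Vector (Fin 3) n} (w : (hanoiGraph n).Walk u v) :
    (hanoiGraph (n + 1)).Walk (u.snoc s) (v.snoc s) :=
  w.map (snocHom n s)

@[simp]
theorem length_snocWalk {n : ℕ} (s : Fin 3) {u v : List.Vector (Fin 3) n}
    (w : (hanoiGraph n).Walk u v) : (snocWalk s w).length = w.length :=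
  Walk.length_map _ _

theorem exists_walk_to_corner (n : ℕ) (t : Fin 3) (x : List.Vector (Fin 3) n) :
    ∃ w : (hanoiGraph n).Walk x (corner n t), (w.length : ℝ) + point x t + 1 ≤ 2 ^ n := by
  induction n generalizing t with
  | zero =>
    obtain rfl := Subsingleton.elim x (corner 0 t)
    exact ⟨Walk.nil, by simp [point_corner]⟩
  | succ n ih =>
    obtain ⟨u, s, rfl⟩ := x.exists_eq_snoc
    rw [corner_succ]
    by_cases hst : s = t
    · subst hst
      obtain ⟨w, hw⟩ := ih s u
      refine ⟨snocWalk s w, ?_⟩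
      rw [length_snocWalk, point_snoc, if_pos rfl, reflect_self, pow_succ]
      linarith
    · obtain ⟨w₁, hw₁⟩ := ih (reflect s t) u
      obtain ⟨w₂, hw₂⟩ := ih t (corner n (reflect s t))
      refine ⟨(snocWalk s w₁).append (.cons (adj_snoc_corner hst) (snocWalk t w₂)), ?_⟩
      rw [point_corner, if_neg (reflect_ne_right hst).symm] at hw₂
      simp only [Walk.length_append, Walk.length_cons, length_snocWalk, point_snoc,
        if_neg (Ne.symm hst), pow_succ]
      push_cast
      linarith

theorem exists_walk_length_le (n : ℕ) (x y : List.Vector (Fin 3) n) :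
    ∃ w : (hanoiGraph n).Walk x y, (w.length : ℝ) ≤ ∑ i, |point x i - point y i| := by
  induction n with
  | zero =>
    obtain rfl := Subsingleton.elim x y
    exact ⟨Walk.nil, by simp⟩
  | succ n ih =>
    obtain ⟨u, s, rfl⟩ := x.exists_eq_snoc
    obtain ⟨v, t, rfl⟩ := y.exists_eq_snoc
    by_cases hst : s = t
    · subst hst
      obtain ⟨w, hw⟩ := ih u v
      refine ⟨snocWalk s w, ?_⟩
      simp only [length_snocWalk, point_snoc, add_sub_add_left_eq_sub]
      exact hw.trans_eq (Equiv.sum_comp (reflect_involutive s).toPerm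
        fun i => |point u i - point v i|).symm
    · set k := reflect s t with hk
      obtain ⟨w₁, hw₁⟩ := exists_walk_to_corner n k u
      obtain ⟨w₂, hw₂⟩ := exists_walk_to_corner n k v
      refine ⟨(snocWalk s w₁).append
        (.cons (adj_snoc_corner hst) (snocWalk t w₂).reverse), ?_⟩
      have hus : point (u.snoc s) s = 2 ^ n + point u s := by simp [point_snoc, reflect_self]
      have hvs : point (v.snoc t) s = point v k := by simp [point_snoc, hst, hk, reflect_comm t s]
      have hut : point (u.snoc s) t = point u k := by simp [point_snoc, Ne.symm hst, hk]
      have hvt : point (v.snoc t) t = 2 ^ n + point v t := by simp [point_snoc, reflect_self]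
      rw [Fin.sum_univ_three_of_ne hst (reflect_ne_left hst).symm (reflect_ne_right hst).symm,
        hus, hvs, hut, hvt]
      simp only [Walk.length_append, Walk.length_cons, Walk.length_reverse, length_snocWalk]
      push_cast
      linarith [le_abs_self (2 ^ n + point u s - point v k),
        neg_abs_le (point u k - (2 ^ n + point v t)),
        abs_nonneg (point (u.snoc s) k - point (v.snoc t) k), point_nonneg u s, point_nonneg v t]

theorem hanoiGraph_reachable {n : ℕ} (x y : List.Vector (Fin 3) n) :
    (hanoiGraph n).Reachable x y :=
  let ⟨w, _⟩ := exists_walk_length_le n x y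
  ⟨w⟩

theorem dist_le_sum_abs_point_sub {n : ℕ} (x y : List.Vector (Fin 3) n) :
    ((hanoiGraph n).dist x y : ℝ) ≤ ∑ i, |point x i - point y i| :=
  let ⟨w, hw⟩ := exists_walk_length_le n x y
  (Nat.cast_le.mpr (dist_le w)).trans hw

def embedding (p : ℝ≥0∞) {n : ℕ} (x : List.Vector (Fin 3) n) : lp (fun _ : ℕ => ℝ) p :=
  finToLp p ((2⁻¹ : ℝ) • point x)

theorem embedding_sub (p : ℝ≥0∞) {n : ℕ} (x y : List.Vector (Fin 3) n) :
    embedding p x - embedding p y = finToLp p ((2⁻¹ : ℝ) • (point x - point y)) := by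
  rw [embedding, embedding, finToLp_sub, smul_sub]

theorem norm_embedding_sub_le_dist (p : ℝ≥0∞) [Fact (1 ≤ p)] {n : ℕ}
    (x y : List.Vector (Fin 3) n) :
    ‖embedding p x - embedding p y‖ ≤ (hanoiGraph n).dist x y := by
  have hedge : ∀ a b, (hanoiGraph n).Adj a b → ‖embedding p a - embedding p b‖ ≤ 1 :=
    fun a b hab => by
      rw [embedding_sub]
      refine (norm_finToLp_le p _).trans_eq ?_
      simp [abs_mul, ← Finset.mul_sum, sum_abs_point_sub_of_adj hab]
  simpa using (hanoiGraph_reachable x y).norm_sub_le_mul_dist hedge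

theorem dist_le_mul_norm_embedding_sub (p : ℝ≥0∞) [Fact (1 ≤ p)] {n : ℕ}
    (x y : List.Vector (Fin 3) n) :
    ((hanoiGraph n).dist x y : ℝ) ≤ 6 * ‖embedding p x - embedding p y‖ :=
  calc ((hanoiGraph n).dist x y : ℝ) ≤ ∑ i, |point x i - point y i| :=
        dist_le_sum_abs_point_sub x y
    _ = 2 * ∑ i, |((2⁻¹ : ℝ) • (point x - point y)) i| := by
        simp [abs_mul, ← Finset.mul_sum]
    _ ≤ 2 * (3 * ‖embedding p x - embedding p y‖) := by
        rw [embedding_sub]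
        gcongr
        exact_mod_cast sum_abs_le_mul_norm_finToLp p _
    _ = 6 * ‖embedding p x - embedding p y‖ := by ring

end Hanoi

/-- Theorem 11: for each `1 ≤ p < ∞` the `ℓ_p`-distortion of the Hanoi
Schreier graphs `Γ_n` is uniformly bounded. -/
theorem statement_16 (p : ℝ) (hp : 1 ≤ p) :
    ∃ C : ℝ, 0 < C ∧ ∀ n : ℕ, 1 ≤ n →
      lpDistortion (List.Vector (Fin 3) n)
          (fun x y => ((hanoiGraph n).dist x y : ℝ)) (ENNReal.ofReal p) ≤ C := by
  have : Fact (1 ≤ ENNReal.ofReal p) := ⟨ENNReal.one_le_ofReal.mpr hp⟩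
  refine ⟨6, by norm_num, fun n _ => ?_⟩
  refine lpDistortion_le (Hanoi.embedding _) (by norm_num) (fun x y hxy => ?_)
    (Hanoi.norm_embedding_sub_le_dist _) fun x y _ => Hanoi.dist_le_mul_norm_embedding_sub _ x y
  exact_mod_cast (Hanoi.hanoiGraph_reachable x y).pos_dist_of_ne hxy
end
end

section
/- For every 1 ≤ p < ∞ there exists a constant C > 0 such that for all n ≥ 1 the level-n Hanoi Schreier graph Γ_n satisfies λ₁^{(p)}(Γ_n) ≤ C · 2^{−np}. -/
/-!
The test function `f(w) = d(w, 0ⁿ)`, the distance to the corner `0ⁿ`, changes by at most `1`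
along each edge, so its `p`-energy is at most the total edge weight `3ⁿ⁺¹`. Its values spread
over `[0, 2ⁿ)`: for each of the `3ⁿ⁻¹` words `w` of length `n - 1`, the vertices `w1` and
`σ(w)0` (`σ` swapping the letters `0` and `2`) satisfy `f(w1) - f(σ(w)0) = 2ⁿ⁻¹`, so whatever
`α` is, each such pair contributes at least `2^((n-2)p)` to `∑ |f - α|^p`. Hence
`λ₁ ≤ 18 · 2^(-(n-2)p)`.
-/

noncomputable section

/-- Edge multiplicities of the level-`n` Hanoi Schreier graph:
`ω(x,y) = #{s ∈ {a,b,c} : s(x) = y}`. -/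
def hanoiOmega (n : ℕ) (x y : List.Vector (Fin 3) n) : ℕ :=
  (([hanoiMove 0 1, hanoiMove 0 2, hanoiMove 1 2].filter
    (fun s => s x.toList = y.toList))).length

open Finset Function

-- For `i ≠ j`, the peg other than `i` and `j`.
def thirdPeg (i j : Fin 3) : Fin 3 := -(i + j)

lemma thirdPeg_comm (i j : Fin 3) : thirdPeg i j = thirdPeg j i := by
  rw [thirdPeg, thirdPeg, add_comm]

lemma thirdPeg_ne_left : ∀ {i j : Fin 3}, i ≠ j → thirdPeg i j ≠ i := by decide

lemma thirdPeg_ne_right : ∀ {i j : Fin 3}, i ≠ j → thirdPeg i j ≠ j := by decide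

lemma eq_thirdPeg : ∀ {i j y : Fin 3}, i ≠ j → y ≠ i → y ≠ j → y = thirdPeg i j := by decide

lemma thirdPeg_thirdPeg_left : ∀ {i j : Fin 3}, i ≠ j → thirdPeg i (thirdPeg i j) = j := by
  decide

lemma thirdPeg_thirdPeg_right : ∀ {i j : Fin 3}, i ≠ j → thirdPeg j (thirdPeg i j) = i := by
  decide

lemma eq_or_eq_or_eq_thirdPeg :
    ∀ {i j : Fin 3}, i ≠ j → ∀ t, t = i ∨ t = j ∨ t = thirdPeg i j := by
  decide

lemma thirdPeg_perm_apply (σ : Equiv.Perm (Fin 3)) {i j : Fin 3} (h : i ≠ j) :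
    thirdPeg (σ i) (σ j) = σ (thirdPeg i j) :=
  (eq_thirdPeg (σ.injective.ne h) (σ.injective.ne (thirdPeg_ne_left h))
    (σ.injective.ne (thirdPeg_ne_right h))).symm

def hanoiDistRev (t : Fin 3) : List (Fin 3) → ℕ
  | [] => 0
  | x :: w =>
    if x = t then hanoiDistRev t w else 2 ^ w.length + hanoiDistRev (thirdPeg x t) w

/-- The classical distance from `w` to the perfect state `t^|w|` (the last letter is the largest
disc: if it is not on `t`, the smaller discs first go to the third peg). -/
def hanoiDist (t : Fin 3) (w : List (Fin 3)) : ℕ := hanoiDistRev t w.reverse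

@[simp]
lemma hanoiDist_nil (t : Fin 3) : hanoiDist t [] = 0 := rfl

lemma hanoiDist_append_singleton (t x : Fin 3) (w : List (Fin 3)) :
    hanoiDist t (w ++ [x]) =
      if x = t then hanoiDist t w else 2 ^ w.length + hanoiDist (thirdPeg x t) w := by
  simp [hanoiDist, hanoiDistRev]

lemma hanoiDist_of_forall_eq {k : Fin 3} {w : List (Fin 3)} (hw : ∀ y ∈ w, y = k) (t : Fin 3) :
    hanoiDist t w = if k = t then 0 else 2 ^ w.length - 1 := by
  induction w using List.reverseRecOn generalizing t with
  | nil => simp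
  | append_singleton w y ih =>
    obtain rfl : y = k := hw y (by simp)
    have ih := fun s => ih (fun z hz => hw z (by simp [hz])) s
    rw [hanoiDist_append_singleton]
    by_cases hyt : y = t
    · simp [hyt, ih]
    · simp only [hyt, if_false, ih, (thirdPeg_ne_left hyt).symm, List.length_append,
        List.length_singleton, pow_succ]
      have : 1 ≤ 2 ^ w.length := Nat.one_le_two_pow
      omega

lemma hanoiDist_map_perm (σ : Equiv.Perm (Fin 3)) (t : Fin 3) (w : List (Fin 3)) :
    hanoiDist (σ t) (w.map σ) = hanoiDist t w := by
  induction w using List.reverseRecOn generalizing t with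
  | nil => rfl
  | append_singleton w x ih =>
    simp only [List.map_append, List.map_singleton, hanoiDist_append_singleton,
      σ.injective.eq_iff, List.length_map]
    split_ifs with hxt
    · exact ih t
    · rw [thirdPeg_perm_apply σ hxt, ih]

lemma hanoiMove_length (i j : Fin 3) (w : List (Fin 3)) :
    (hanoiMove i j w).length = w.length := by
  induction w with
  | nil => rfl
  | cons y w ih =>
    simp only [hanoiMove]
    split_ifs <;> simp [ih]

lemma hanoiMove_hanoiMove (i j : Fin 3) (w : List (Fin 3)) :
    hanoiMove i j (hanoiMove i j w) = w := by
  induction w with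
  | nil => rfl
  | cons y w ih =>
    simp only [hanoiMove]
    split_ifs <;> simp_all [hanoiMove]

lemma hanoiMove_append_singleton_of_forall {i j : Fin 3} {w : List (Fin 3)}
    (hw : ∀ y ∈ w, y ≠ i ∧ y ≠ j) (x : Fin 3) :
    hanoiMove i j (w ++ [x]) = w ++ [Equiv.swap i j x] := by
  induction w with
  | nil =>
    simp only [List.nil_append, hanoiMove, Equiv.swap_apply_def]
    split_ifs <;> rfl
  | cons y w ih =>
    obtain ⟨hyi, hyj⟩ := hw y (by simp)
    simp [hanoiMove, hyi, hyj, ih (fun z hz => hw z (by simp [hz]))]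

lemma hanoiMove_append_singleton_of_exists {i j : Fin 3} {w : List (Fin 3)}
    (hw : ∃ y ∈ w, y = i ∨ y = j) (x : Fin 3) :
    hanoiMove i j (w ++ [x]) = hanoiMove i j w ++ [x] := by
  induction w with
  | nil => simp at hw
  | cons y w ih =>
    by_cases hy : y = i ∨ y = j
    · simp only [List.cons_append, hanoiMove]
      split_ifs <;> simp_all
    · push Not at hy
      obtain ⟨z, hz, hzij⟩ := hw
      have hz' : z ∈ w := by
        rcases List.mem_cons.mp hz with rfl | hz
        · tauto
        · exact hz
      simp [hanoiMove, hy.1, hy.2, ih ⟨z, hz', hzij⟩]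

lemma hanoiDist_swap_last_le {i j : Fin 3} (hij : i ≠ j) {w : List (Fin 3)}
    (hw : ∀ y ∈ w, y = thirdPeg i j) (t : Fin 3) :
    hanoiDist t (w ++ [j]) ≤ hanoiDist t (w ++ [i]) + 1 := by
  have hki := thirdPeg_ne_left hij
  have hkj := thirdPeg_ne_right hij
  have hd := hanoiDist_of_forall_eq hw
  have := @Nat.one_le_two_pow w.length
  simp only [hanoiDist_append_singleton]
  rcases eq_or_eq_or_eq_thirdPeg hij t with rfl | rfl | rfl
  · simp [hij.symm, thirdPeg_comm j, hd, hki]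
    omega
  · simp [hij, hd, hkj]
    omega
  · simp [hd, hki, hkj, hkj.symm, hki.symm, thirdPeg_thirdPeg_left hij,
      thirdPeg_thirdPeg_right hij]

lemma hanoiDist_hanoiMove_le {i j : Fin 3} (hij : i ≠ j) (t : Fin 3) (u : List (Fin 3)) :
    hanoiDist t (hanoiMove i j u) ≤ hanoiDist t u + 1 := by
  induction u using List.reverseRecOn generalizing t with
  | nil => simp [hanoiMove]
  | append_singleton w x ih =>
    by_cases hw : ∃ y ∈ w, y = i ∨ y = j
    · rw [hanoiMove_append_singleton_of_exists hw, hanoiDist_append_singleton,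
        hanoiDist_append_singleton, hanoiMove_length]
      split_ifs
      · exact ih t
      · have := ih (thirdPeg x t)
        omega
    · push Not at hw
      rw [hanoiMove_append_singleton_of_forall hw]
      have hk : ∀ y ∈ w, y = thirdPeg i j := fun y hy => eq_thirdPeg hij (hw y hy).1 (hw y hy).2
      by_cases hxi : x = i
      · rw [hxi, Equiv.swap_apply_left]
        exact hanoiDist_swap_last_le hij hk t
      by_cases hxj : x = j
      · rw [hxj, Equiv.swap_apply_right]
        exact hanoiDist_swap_last_le hij.symm (thirdPeg_comm i j ▸ hk) t
      · rw [Equiv.swap_apply_of_ne_of_ne hxi hxj]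
        omega

section RayleighQuotient

variable {V : Type*} [Fintype V]

def pEnergy (ω : V → V → ℕ) (p : ℝ) (f : V → ℝ) : ℝ :=
  ∑ x, ∑ y, |f x - f y| ^ p * (ω x y : ℝ)

def pDeviation (p : ℝ) (f : V → ℝ) : ℝ :=
  ⨅ α : ℝ, ∑ x, |f x - α| ^ p

lemma lambdaOne_le_pEnergy_div_pDeviation {ω : V → V → ℕ} {p : ℝ} {f : V → ℝ}
    (hf : ¬ ∀ x y, f x = f y) :
    lambdaOne ω p ≤ pEnergy ω p f / pDeviation p f := by
  refine csInf_le ⟨0, ?_⟩ ⟨f, hf, rfl⟩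
  rintro r ⟨g, -, rfl⟩
  exact div_nonneg (sum_nonneg fun x _ => sum_nonneg fun y _ => by positivity)
    (Real.iInf_nonneg fun α => sum_nonneg fun x _ => by positivity)

lemma pEnergy_le_sum_of_lipschitz {ω : V → V → ℕ} {p : ℝ} (hp : 0 ≤ p) {f : V → ℝ}
    (hf : ∀ x y, ω x y ≠ 0 → |f x - f y| ≤ 1) :
    pEnergy ω p f ≤ ∑ x, ∑ y, (ω x y : ℝ) := by
  refine sum_le_sum fun x _ => sum_le_sum fun y _ => ?_
  by_cases h : ω x y = 0
  · simp [h]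
  · exact mul_le_of_le_one_left (Nat.cast_nonneg _)
      (Real.rpow_le_one (abs_nonneg _) (hf x y h) hp)

lemma sum_comp_le_sum_of_injective {W : Type*} [Fintype W] {ι : W → V} (hι : Injective ι)
    {h : V → ℝ} (hh : ∀ x, 0 ≤ h x) : ∑ w, h (ι w) ≤ ∑ x, h x := by
  classical
  rw [← sum_image fun _ _ _ _ hab => hι hab]
  exact sum_le_sum_of_subset_of_nonneg (subset_univ _) fun x _ _ => hh x

lemma rpow_le_abs_sub_rpow_add_abs_sub_rpow {a b g p : ℝ} (α : ℝ) (hp : 0 ≤ p) (hg : 0 ≤ g)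
    (hab : 2 * g ≤ |a - b|) : g ^ p ≤ |a - α| ^ p + |b - α| ^ p := by
  rcases le_total g |a - α| with h | h
  · exact (Real.rpow_le_rpow hg h hp).trans (le_add_of_nonneg_right (by positivity))
  · have hb : g ≤ |b - α| := by
      have := abs_sub_le a α b
      rw [abs_sub_comm α b] at this
      linarith
    exact (Real.rpow_le_rpow hg hb hp).trans (le_add_of_nonneg_left (by positivity))

lemma le_pDeviation_of_pairs {p : ℝ} (hp : 0 ≤ p) {f : V → ℝ} {W : Type*} [Fintype W]
    {ι₁ ι₂ : W → V} (h₁ : Injective ι₁) (h₂ : Injective ι₂) {g : ℝ} (hg : 0 ≤ g)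
    (hgap : ∀ w, 2 * g ≤ |f (ι₁ w) - f (ι₂ w)|) :
    Fintype.card W * g ^ p / 2 ≤ pDeviation p f := by
  refine le_ciInf fun α => ?_
  have hnn : ∀ x, 0 ≤ |f x - α| ^ p := fun x => by positivity
  calc Fintype.card W * g ^ p / 2 = (∑ _w : W, g ^ p) / 2 := by simp
    _ ≤ (∑ w, (|f (ι₁ w) - α| ^ p + |f (ι₂ w) - α| ^ p)) / 2 := by
      gcongr with w
      exact rpow_le_abs_sub_rpow_add_abs_sub_rpow α hp hg (hgap w)
    _ ≤ (∑ x, |f x - α| ^ p + ∑ x, |f x - α| ^ p) / 2 := by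
      rw [sum_add_distrib]
      gcongr
      exacts [sum_comp_le_sum_of_injective h₁ hnn, sum_comp_le_sum_of_injective h₂ hnn]
    _ = ∑ x, |f x - α| ^ p := by ring

end RayleighQuotient

lemma hanoiOmega_eq_ite (n : ℕ) (x y : List.Vector (Fin 3) n) :
    hanoiOmega n x y =
      (if hanoiMove 0 1 x.toList = y.toList then 1 else 0) +
      (if hanoiMove 0 2 x.toList = y.toList then 1 else 0) +
      (if hanoiMove 1 2 x.toList = y.toList then 1 else 0) := by
  simp only [hanoiOmega, List.filter]
  split_ifs <;> simp_all

lemma card_toList_eq_le_one {n : ℕ} (l : List (Fin 3)) :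
    #{y : List.Vector (Fin 3) n | l = y.toList} ≤ 1 :=
  card_le_one.mpr fun _ ha _ hb =>
    List.Vector.toList_injective ((mem_filter.mp ha).2.symm.trans (mem_filter.mp hb).2)

lemma sum_sum_hanoiOmega_le (n : ℕ) :
    ∑ x : List.Vector (Fin 3) n, ∑ y, (hanoiOmega n x y : ℝ) ≤ 3 ^ (n + 1) := by
  have hrow : ∀ x : List.Vector (Fin 3) n, ∑ y, hanoiOmega n x y ≤ 3 := fun x => by
    simp only [hanoiOmega_eq_ite, sum_add_distrib, sum_boole]
    have := card_toList_eq_le_one (n := n)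
    linarith [this (hanoiMove 0 1 x.toList), this (hanoiMove 0 2 x.toList),
      this (hanoiMove 1 2 x.toList)]
  calc ∑ x : List.Vector (Fin 3) n, ∑ y, (hanoiOmega n x y : ℝ)
      ≤ ∑ _x : List.Vector (Fin 3) n, (3 : ℝ) := sum_le_sum fun x _ => by exact_mod_cast hrow x
    _ = 3 ^ (n + 1) := by simp [card_vector, pow_succ]

lemma exists_hanoiMove_of_hanoiOmega_ne_zero {n : ℕ} {x y : List.Vector (Fin 3) n}
    (h : hanoiOmega n x y ≠ 0) :
    ∃ s ∈ [hanoiMove 0 1, hanoiMove 0 2, hanoiMove 1 2], s x.toList = y.toList := by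
  obtain ⟨s, hs⟩ := List.exists_mem_of_length_pos (Nat.pos_of_ne_zero h)
  rw [List.mem_filter, decide_eq_true_iff] at hs
  exact ⟨s, hs⟩

lemma abs_hanoiDist_hanoiMove_sub_le {i j : Fin 3} (hij : i ≠ j) (t : Fin 3) (u : List (Fin 3)) :
    |(hanoiDist t (hanoiMove i j u) : ℝ) - hanoiDist t u| ≤ 1 := by
  have h₁ := hanoiDist_hanoiMove_le hij t u
  have h₂ := hanoiDist_hanoiMove_le hij t (hanoiMove i j u)
  rw [hanoiMove_hanoiMove] at h₂
  rw [abs_sub_le_iff]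
  constructor <;> linarith [(Nat.cast_le (α := ℝ)).mpr h₁, (Nat.cast_le (α := ℝ)).mpr h₂,
    Nat.cast_add_one (R := ℝ) (hanoiDist t u),
    Nat.cast_add_one (R := ℝ) (hanoiDist t (hanoiMove i j u))]

lemma abs_hanoiDist_sub_le_one {n : ℕ} (t : Fin 3) {x y : List.Vector (Fin 3) n}
    (h : hanoiOmega n x y ≠ 0) : |(hanoiDist t x.toList : ℝ) - hanoiDist t y.toList| ≤ 1 := by
  obtain ⟨s, hs, hxy⟩ := exists_hanoiMove_of_hanoiOmega_ne_zero h
  rw [← hxy, abs_sub_comm]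
  simp only [List.mem_cons, List.not_mem_nil, or_false] at hs
  rcases hs with rfl | rfl | rfl <;> exact abs_hanoiDist_hanoiMove_sub_le (by decide) t _

lemma hanoiDist_append_one (w : List (Fin 3)) :
    hanoiDist 0 (w ++ [1]) = 2 ^ w.length + hanoiDist 0 (w.map (Equiv.swap 0 2) ++ [0]) := by
  have h := hanoiDist_map_perm (Equiv.swap 0 2) 2 w
  rw [Equiv.swap_apply_right] at h
  rw [hanoiDist_append_singleton, hanoiDist_append_singleton, if_pos rfl, if_neg (by decide), h]
  rfl

lemma List.Vector.toList_snoc_s17 {α : Type*} {n : ℕ} (w : List.Vector α n) (a : α) :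
    (w.snoc a).toList = w.toList ++ [a] := by
  simp [List.Vector.snoc, List.Vector.toList_append]

lemma List.Vector.snoc_left_injective {α : Type*} {n : ℕ} (a : α) :
    Injective fun w : List.Vector α n => w.snoc a := fun v w h =>
  List.Vector.toList_injective <| List.append_cancel_right <| by
    simpa only [List.Vector.toList_snoc_s17] using congrArg List.Vector.toList h

lemma lambdaOne_hanoiOmega_le {p : ℝ} (hp : 0 ≤ p) (m : ℕ) :
    lambdaOne (hanoiOmega (m + 1)) p ≤ 18 / (2 ^ m / 2) ^ p := by
  set σ := Equiv.swap (0 : Fin 3) 2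
  set f : List.Vector (Fin 3) (m + 1) → ℝ := fun x => hanoiDist 0 x.toList
  have hgap : ∀ w : List.Vector (Fin 3) m,
      2 * (2 ^ m / 2 : ℝ) ≤ |f (w.snoc 1) - f ((w.map σ).snoc 0)| := fun w => by
    simp [f, List.Vector.toList_snoc_s17, hanoiDist_append_one w.toList, σ]
    linarith
  have hf : ¬ ∀ x y, f x = f y := fun h => by
    have := hgap (List.Vector.replicate m 0)
    rw [h, sub_self, abs_zero] at this
    linarith [pow_pos (two_pos (α := ℝ)) m]
  have hmap : Injective fun w : List.Vector (Fin 3) m => (w.map σ).snoc 0 :=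
    (List.Vector.snoc_left_injective 0).comp fun v w h => List.Vector.toList_injective <|
      List.map_injective_iff.mpr σ.injective <| by
        simpa using congrArg List.Vector.toList h
  have hdev := le_pDeviation_of_pairs hp (List.Vector.snoc_left_injective 1) hmap
    (by positivity) hgap
  rw [card_vector, Fintype.card_fin] at hdev
  have hlip : ∀ x y, hanoiOmega (m + 1) x y ≠ 0 → |f x - f y| ≤ 1 :=
    fun _ _ => abs_hanoiDist_sub_le_one 0
  calc lambdaOne (hanoiOmega (m + 1)) p ≤ pEnergy (hanoiOmega (m + 1)) p f / pDeviation p f :=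
        lambdaOne_le_pEnergy_div_pDeviation hf
    _ ≤ 3 ^ (m + 2) / (((3 ^ m : ℕ) : ℝ) * (2 ^ m / 2) ^ p / 2) :=
        div_le_div₀ (by positivity)
          ((pEnergy_le_sum_of_lipschitz hp hlip).trans (sum_sum_hanoiOmega_le _))
          (by positivity) hdev
    _ = 18 / (2 ^ m / 2) ^ p := by
        have : (0 : ℝ) < (2 ^ m / 2) ^ p := by positivity
        push_cast
        field_simp
        ring

/-- Theorem 13: for each `1 ≤ p < ∞` there is `C > 0` such that the
`p`-spectral gap of the Hanoi Schreier graphs satisfies `λ₁^{(p)}(Γ_n) ≤ C·2^{−np}`. -/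
theorem statement_17 (p : ℝ) (hp : 1 ≤ p) :
    ∃ C : ℝ, 0 < C ∧ ∀ n : ℕ, 1 ≤ n →
      lambdaOne (hanoiOmega n) p ≤ C * 2 ^ (-(n : ℝ) * p) := by
  refine ⟨18 * 4 ^ p, by positivity, fun n hn => ?_⟩
  obtain ⟨m, rfl⟩ : ∃ m, n = m + 1 := ⟨n - 1, by omega⟩
  refine (lambdaOne_hanoiOmega_le (by linarith) m).trans_eq ?_
  have h2 : (0 : ℝ) < 2 := two_pos
  rw [show (2 : ℝ) ^ m / 2 = 2 ^ ((m : ℝ) - 1) by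
      rw [Real.rpow_sub h2, Real.rpow_one, Real.rpow_natCast],
    show (4 : ℝ) = 2 ^ (2 : ℝ) by norm_num, ← Real.rpow_mul h2.le, ← Real.rpow_mul h2.le,
    mul_assoc, ← Real.rpow_add h2, div_eq_mul_inv, ← Real.rpow_neg h2.le]
  congr 2
  push_cast
  ring
end
end
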